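/- arXiv:2206.04260 — 3 statements merged into one kernel-verified Lean document; each statement's English description precedes it below -/
import Mathlib

section
/- For any a, b ≥ 2 there exists a configuration of size exactly C(a+b-4, a-2) containing no a-cap and no b-cup; hence the maximum size of an a-cap-free and b-cup-free configuration is exactly C(a+b-4, a-2). -/
/-!
Upper bound (Erdős–Szekeres): split `S` into the endpoints `E` of `(a-1)`-caps and the rest `F`.
`F` has no `(a-1)`-cap, and `E` has no `(b-1)`-cup: if such a cup starts at `p` and an
`(a-1)`-cap ends at `p`, the triple formed by the point before `p` on the cap, `p` and the point
after `p` on the cup extends either the cup to a `b`-cup or the cap to an `a`-cap. Induction on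
`a + b` and Pascal's rule give `|S| ≤ C(a+b-4, a-2)`.

Lower bound: place an `(a-1, b)`-extremal configuration to the left of an `(a, b-1)`-extremal one
and color a triple meeting both blocks a cup exactly when its middle point is on the right.
Then a cap has at most one point on the right unless it lies entirely there, and a cup has at most
one point on the left unless it lies entirely there.
-/

variable {α : Type*} [LinearOrder α]

/-- Every consecutive triple of the list satisfies `f`. -/
def Triples (f : α → α → α → Prop) : List α → Prop
  | x :: y :: z :: l => f x y z ∧ Triples f (y :: z :: l)
  | _ => True

/-- `l` is a cup in the configuration `(S, cup)`: a nonempty increasing list of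
vertices of `S` all of whose consecutive triples are colored cup. -/
def IsCupIn (S : Finset α) (cup : α → α → α → Prop) (l : List α) : Prop :=
  l ≠ [] ∧ l.Chain' (· < ·) ∧ (∀ x ∈ l, x ∈ S) ∧ Triples cup l

/-- `l` is a cap in the configuration `(S, cup)`. -/
def IsCapIn (S : Finset α) (cup : α → α → α → Prop) (l : List α) : Prop :=
  l ≠ [] ∧ l.Chain' (· < ·) ∧ (∀ x ∈ l, x ∈ S) ∧ Triples (fun x y z => ¬ cup x y z) l

/-- The configuration has no cap with `a` (or more) vertices. -/
def CapFree (S : Finset α) (cup : α → α → α → Prop) (a : ℕ) : Prop :=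
  ∀ l : List α, IsCapIn S cup l → l.length < a

/-- The configuration has no cup with `b` (or more) vertices. -/
def CupFree (S : Finset α) (cup : α → α → α → Prop) (b : ℕ) : Prop :=
  ∀ l : List α, IsCupIn S cup l → l.length < b

def StartsAt (l : List α) (p : α) : Prop := l.head? = some p

def EndsAt (l : List α) (p : α) : Prop := l.getLast? = some p

/-- A weak `(a, b)`-gon: an `a`-cap and a `b`-cup sharing both endpoints. -/
def HasWeakGon (S : Finset α) (cup : α → α → α → Prop) (a b : ℕ) : Prop :=
  ∃ (A U : List α) (x y : α), IsCapIn S cup A ∧ A.length = a ∧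
    IsCupIn S cup U ∧ U.length = b ∧
    StartsAt A x ∧ StartsAt U x ∧ EndsAt A y ∧ EndsAt U y

/-- Two cups from `p` to `r` and from `q` to `s` are interweaved if `p < q ≤ r < s`. -/
def Interweaved (C₁ C₂ : List α) : Prop :=
  ∃ p r q s, StartsAt C₁ p ∧ EndsAt C₁ r ∧ StartsAt C₂ q ∧ EndsAt C₂ s ∧
    p < q ∧ q ≤ r ∧ r < s

/-- A laced `(n-1)`-cup: an `(n-1)`-cup from `p` to `q` together with a cup ending
at `p` and a cup starting at `q` whose sizes sum to `n - 1`. -/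
def IsLacedCup (S : Finset α) (cup : α → α → α → Prop) (n : ℕ) (C : List α) : Prop :=
  IsCupIn S cup C ∧ C.length = n - 1 ∧
  ∃ p q Cp Cq, StartsAt C p ∧ EndsAt C q ∧ IsCupIn S cup Cp ∧ IsCupIn S cup Cq ∧
    EndsAt Cp p ∧ StartsAt Cq q ∧ Cp.length + Cq.length = n - 1

/-- A slope labeling of an `a`-cap-free configuration: labels in `{1, …, a-2}`
such that `s x y ≤ s y z` forces `x y z` to be a cup. -/
def IsSlopeLabeling (S : Finset α) (cup : α → α → α → Prop) (a : ℕ) (s : α → α → ℕ) : Prop :=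
  (∀ x ∈ S, ∀ y ∈ S, x < y → 1 ≤ s x y ∧ s x y ≤ a - 2) ∧
  (∀ x ∈ S, ∀ y ∈ S, ∀ z ∈ S, x < y → y < z → s x y ≤ s y z → cup x y z)

/-- `α_i(p)`: maximum length of a cup ending at `p` with last edge of label `≤ i`
(`1` if there is no such cup). -/
noncomputable def alphaStat (S : Finset α) (cup : α → α → α → Prop) (s : α → α → ℕ)
    (i : ℕ) (p : α) : ℕ :=
  max 1 (sSup {k | ∃ (l : List α) (x : α), IsCupIn S cup l ∧ EndsAt l p ∧
    l.length = k ∧ l.dropLast.getLast? = some x ∧ s x p ≤ i})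

/-- `β(p)`: maximum length of a cup ending at `p` (`1` if there is none). -/
noncomputable def betaStat (S : Finset α) (cup : α → α → α → Prop) (p : α) : ℕ :=
  max 1 (sSup {k | ∃ l : List α, IsCupIn S cup l ∧ EndsAt l p ∧ l.length = k})

/-- The cup coloring of the mirror reflection. -/
def opCup (cup : α → α → α → Prop) : αᵒᵈ → αᵒᵈ → αᵒᵈ → Prop :=
  fun x y z => cup (OrderDual.ofDual z) (OrderDual.ofDual y) (OrderDual.ofDual x)

/-- The vertex set of the mirror reflection. -/
def opSet (S : Finset α) : Finset αᵒᵈ := S.map OrderDual.toDual.toEmbedding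

/-- The mirror reflection of a cap/cup. -/
def opList (l : List α) : List αᵒᵈ := (l.map OrderDual.toDual).reverse

section Triples

variable {α : Type*} {f g : α → α → α → Prop}

theorem triples_iff {l : List α} :
    Triples f l ↔ ∀ u x y z v, l = u ++ x :: y :: z :: v → f x y z := by
  induction l with
  | nil => simp [Triples]
  | cons a t ih =>
    match t, ih with
    | [], _ | [_], _ =>
      simp only [Triples, true_iff]
      intro u x y z v h
      have := congrArg List.length h
      simp only [List.length_append, List.length_cons, List.length_nil] at this
      omega
    | b :: c :: t, ih =>
      simp only [Triples, ih]
      constructor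
      · rintro ⟨habc, h⟩ (_ | ⟨d, u⟩) x y z v huv
        · simp only [List.nil_append, List.cons.injEq] at huv
          obtain ⟨rfl, rfl, rfl, -⟩ := huv
          exact habc
        · exact h u x y z v (List.cons.inj huv).2
      · intro h
        exact ⟨h [] a b c t rfl, fun u x y z v huv => h (a :: u) x y z v (by rw [huv]; rfl)⟩

theorem Triples.infix {l l' : List α} (h : Triples f l) (hl : l' <:+: l) : Triples f l' := by
  obtain ⟨s, t, rfl⟩ := hl
  rw [triples_iff] at h ⊢
  rintro u x y z v rfl
  exact h (s ++ u) x y z (v ++ t) (by simp)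

theorem Triples.imp {l : List α} (h : Triples f l)
    (hfg : ∀ x ∈ l, ∀ y ∈ l, ∀ z ∈ l, f x y z → g x y z) : Triples g l := by
  rw [triples_iff] at h ⊢
  rintro u x y z v rfl
  exact hfg x (by simp) y (by simp) z (by simp) (h u x y z v rfl)

theorem Triples.append_pair {l : List α} {x y z : α} (h : Triples f (l ++ [x, y]))
    (hxyz : f x y z) : Triples f (l ++ [x, y, z]) := by
  rw [triples_iff] at h ⊢
  intro u c d e v huv
  rcases List.eq_nil_or_concat v with rfl | ⟨v, w, rfl⟩
  · have : [x, y, z] = [c, d, e] := (List.append_inj' huv rfl).2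
    simp only [List.cons.injEq, and_true] at this
    obtain ⟨rfl, rfl, rfl⟩ := this
    exact hxyz
  · have huv' : (l ++ [x, y]) ++ [z] = (u ++ c :: d :: e :: v) ++ [w] := by simpa using huv
    exact h u c d e v (List.append_inj' huv' rfl).1

theorem List.exists_eq_append_pair {l : List α} (h : 2 ≤ l.length) :
    ∃ l' x y, l = l' ++ [x, y] := by
  rcases l.eq_nil_or_concat with rfl | ⟨l, y, rfl⟩
  · simp at h
  rcases l.eq_nil_or_concat with rfl | ⟨l, x, rfl⟩
  · simp at h
  exact ⟨l, x, y, by simp⟩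

end Triples

theorem List.Pairwise.exists_eq_append_lt_le (M : α) :
    ∀ {l : List α}, l.Pairwise (· < ·) →
      ∃ l₁ l₂, l = l₁ ++ l₂ ∧ (∀ x ∈ l₁, x < M) ∧ ∀ x ∈ l₂, M ≤ x
  | [], _ => ⟨[], [], rfl, by simp, by simp⟩
  | a :: t, h => by
    by_cases ha : a < M
    · obtain ⟨t₁, t₂, rfl, h₁, h₂⟩ := exists_eq_append_lt_le M h.of_cons
      exact ⟨a :: t₁, t₂, rfl, by simpa [ha] using h₁, h₂⟩
    · refine ⟨[], a :: t, rfl, by simp, ?_⟩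
      simp only [List.mem_cons, forall_eq_or_imp]
      exact ⟨not_lt.mp ha, fun x hx => (not_lt.mp ha).trans (List.rel_of_pairwise_cons h hx).le⟩

section Cups

variable {S T : Finset α} {f g cup : α → α → α → Prop} {l l' : List α} {a b : ℕ}

theorem IsCupIn.restrict (h : IsCupIn S f l) (hne : l' ≠ []) (hl : l' <:+: l)
    (hT : ∀ x ∈ l', x ∈ T) (hfg : ∀ x ∈ l', ∀ y ∈ l', ∀ z ∈ l', f x y z → g x y z) :
    IsCupIn T g l' :=
  ⟨hne, h.2.1.sublist hl.sublist, hT, (h.2.2.2.infix hl).imp hfg⟩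

theorem IsCupIn.infix (h : IsCupIn S f l) (hne : l' ≠ []) (hl : l' <:+: l) : IsCupIn S f l' :=
  h.restrict hne hl (fun x hx => h.2.2.1 x (hl.subset hx)) fun _ _ _ _ _ _ => id

theorem IsCupIn.mono (h : IsCupIn S f l) (hST : S ⊆ T) : IsCupIn T f l :=
  ⟨h.1, h.2.1, fun x hx => hST (h.2.2.1 x hx), h.2.2.2⟩

theorem IsCupIn.cons {p y x : α} {U : List α} (h : IsCupIn S f (p :: y :: U)) (hx : x ∈ S)
    (hxp : x < p) (hf : f x p y) : IsCupIn S f (x :: p :: y :: U) :=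
  ⟨List.cons_ne_nil _ _, List.isChain_cons_cons.mpr ⟨hxp, h.2.1⟩,
    List.forall_mem_cons.mpr ⟨hx, h.2.2.1⟩, hf, h.2.2.2⟩

theorem IsCupIn.append_pair {A : List α} {x p y : α} (h : IsCupIn S f (A ++ [x, p]))
    (hy : y ∈ S) (hpy : p < y) (hf : f x p y) : IsCupIn S f (A ++ [x, p, y]) := by
  refine ⟨by simp, ?_, ?_, h.2.2.2.append_pair hf⟩
  · rw [show A ++ [x, p, y] = (A ++ [x, p]) ++ [y] by simp]
    exact List.isChain_append.mpr ⟨h.2.1, List.isChain_singleton y, by simpa using hpy⟩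
  · intro z hz
    simp only [List.mem_append, List.mem_cons, List.not_mem_nil, or_false] at hz
    rcases hz with hz | rfl | rfl | rfl
    · exact h.2.2.1 z (by simp [hz])
    · exact h.2.2.1 z (by simp)
    · exact h.2.2.1 z (by simp)
    · exact hy

theorem isCupIn_pair {x y : α} (hx : x ∈ S) (hy : y ∈ S) (hxy : x < y) : IsCupIn S f [x, y] :=
  ⟨by simp, List.isChain_pair.mpr hxy, by simp [hx, hy], trivial⟩

theorem IsCupIn.length_le_card (h : IsCupIn S f l) : l.length ≤ S.card := by
  classical
  have hnodup : l.Nodup := h.2.1.pairwise.nodup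
  rw [← List.toFinset_card_of_nodup hnodup]
  exact Finset.card_le_card fun x hx => h.2.2.1 x (List.mem_toFinset.mp hx)

theorem cupFree_of_card_lt (h : S.card < b) : CupFree S f b :=
  fun _ hl => hl.length_le_card.trans_lt h

theorem cupFree_iff_not_exists (hb : 1 ≤ b) :
    CupFree S f b ↔ ¬ ∃ l, IsCupIn S f l ∧ l.length = b := by
  refine ⟨fun h ⟨l, hl, hlen⟩ => (h l hl).ne hlen, fun h l hl => ?_⟩
  by_contra! hlen
  refine h ⟨l.take b, hl.infix ?_ (List.take_prefix b l).isInfix, by simp [hlen]⟩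
  rw [← List.length_pos_iff, List.length_take]
  omega

theorem capFree_iff_not_exists {a : ℕ} (ha : 1 ≤ a) :
    CapFree S cup a ↔ ¬ ∃ l, IsCapIn S cup l ∧ l.length = a :=
  cupFree_iff_not_exists ha

theorem CupFree.mono (h : CupFree T f b) (hST : S ⊆ T) : CupFree S f b :=
  fun l hl => h l (hl.mono hST)

theorem CupFree.card_le_one (h : CupFree S f 2) : S.card ≤ 1 := by
  refine Finset.card_le_one.mpr fun x hx y hy => ?_
  by_contra hxy
  rcases lt_or_gt_of_ne hxy with hlt | hlt
  · exact (h _ (isCupIn_pair hx hy hlt)).ne rfl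
  · exact (h _ (isCupIn_pair hy hx hlt)).ne rfl

end Cups

section UpperBound

variable {S T : Finset α} {f cup : α → α → α → Prop} {a b : ℕ}

theorem CupFree.of_forall_not_endsAt (h : CupFree S f (a + 1)) (hTS : T ⊆ S)
    (hT : ∀ p ∈ T, ¬ ∃ A, IsCupIn S f A ∧ A.length = a ∧ EndsAt A p) : CupFree T f a := by
  intro l hl
  by_contra! hla
  have hlS := hl.mono hTS
  refine hT _ (hl.2.2.1 _ (List.getLast_mem hl.1)) ⟨l, hlS, ?_, List.getLast?_eq_some_getLast hl.1⟩
  have := h l hlS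
  omega

theorem cupFree_of_forall_endsAt_cap (ha : 2 ≤ a) (hb : 2 ≤ b) (hcap : CapFree S cup (a + 1))
    (hcup : CupFree S cup (b + 1)) (hTS : T ⊆ S)
    (hT : ∀ p ∈ T, ∃ A, IsCapIn S cup A ∧ A.length = a ∧ EndsAt A p) : CupFree T cup b := by
  rintro (_ | ⟨p, _ | ⟨y, U⟩⟩) hU
  · exact absurd rfl hU.1
  · simp only [List.length_singleton]
    omega
  by_contra! hlen
  obtain ⟨A, hA, hAlen, hAp⟩ := hT p (hU.2.2.1 p (by simp))
  obtain ⟨B, x, q, rfl⟩ := List.exists_eq_append_pair (ha.trans hAlen.ge)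
  obtain rfl : q = p := by simpa [EndsAt] using hAp
  have hUS := hU.mono hTS
  have hxp : x < q := List.isChain_pair.mp (hA.2.1.sublist (List.sublist_append_right B _))
  by_cases hxpy : cup x q y
  · have := hcup _ (hUS.cons (hA.2.2.1 x (by simp)) hxp hxpy)
    simp only [List.length_cons] at this hlen
    omega
  · have := hcap _ (IsCupIn.append_pair hA (hUS.2.2.1 y (by simp))
      (List.isChain_cons_cons.mp hUS.2.1).1 hxpy)
    simp only [List.length_append, List.length_cons] at this hAlen
    omega

theorem card_le_choose_of_capFree_of_cupFree :
    ∀ {a b : ℕ} {S : Finset α} {cup : α → α → α → Prop},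
      CapFree S cup (a + 2) → CupFree S cup (b + 2) → S.card ≤ (a + b).choose a
  | 0, b, S, cup, hcap, _ => by simpa using CupFree.card_le_one hcap
  | a + 1, 0, S, cup, _, hcup => by simpa using hcup.card_le_one
  | a + 1, b + 1, S, cup, hcap, hcup => by
    classical
    let P : α → Prop := fun p => ∃ A, IsCapIn S cup A ∧ A.length = a + 2 ∧ EndsAt A p
    have hE : CupFree (S.filter P) cup (b + 2) :=
      cupFree_of_forall_endsAt_cap (by omega) (by omega) hcap hcup (Finset.filter_subset _ _)
        fun p hp => (Finset.mem_filter.mp hp).2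
    have hF : CapFree (S.filter (¬ P ·)) cup (a + 2) :=
      CupFree.of_forall_not_endsAt hcap (Finset.filter_subset _ _)
        fun p hp => (Finset.mem_filter.mp hp).2
    calc S.card = (S.filter P).card + (S.filter (¬ P ·)).card :=
          (Finset.card_filter_add_card_filter_not _).symm
      _ ≤ (a + 1 + b).choose (a + 1) + (a + (b + 1)).choose a :=
          add_le_add
            (card_le_choose_of_capFree_of_cupFree (CupFree.mono hcap (Finset.filter_subset _ _)) hE)
            (card_le_choose_of_capFree_of_cupFree hF (hcup.mono (Finset.filter_subset _ _)))
      _ = (a + 1 + (b + 1)).choose (a + 1) := by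
          rw [show a + 1 + (b + 1) = a + b + 1 + 1 by omega, Nat.choose_succ_succ']
          ring_nf

end UpperBound

section Construction

def glueCup (M : α) (cupL cupR : α → α → α → Prop) : α → α → α → Prop :=
  fun x y z => if z < M then cupL x y z else if M ≤ x then cupR x y z else M ≤ y

variable {M : α} {SL SR : Finset α} {f g cupL cupR : α → α → α → Prop} {l l' : List α}
  {a b : ℕ}

theorem IsCupIn.restrict_left (hR : ∀ x ∈ SR, M ≤ x) (hl : IsCupIn (SL ∪ SR) f l)
    (hne : l' ≠ []) (hl' : l' <:+: l) (hlt : ∀ x ∈ l', x < M)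
    (hfg : ∀ x y z, x < M → y < M → z < M → f x y z → g x y z) : IsCupIn SL g l' :=
  hl.restrict hne hl'
    (fun x hx => (Finset.mem_union.mp (hl.2.2.1 x (hl'.subset hx))).resolve_right
      fun hxR => (hR x hxR).not_gt (hlt x hx))
    fun x hx y hy z hz => hfg x y z (hlt x hx) (hlt y hy) (hlt z hz)

theorem IsCupIn.restrict_right (hL : ∀ x ∈ SL, x < M) (hl : IsCupIn (SL ∪ SR) f l)
    (hne : l' ≠ []) (hl' : l' <:+: l) (hle : ∀ x ∈ l', M ≤ x)
    (hfg : ∀ x y z, M ≤ x → M ≤ y → M ≤ z → f x y z → g x y z) : IsCupIn SR g l' :=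
  hl.restrict hne hl'
    (fun x hx => (Finset.mem_union.mp (hl.2.2.1 x (hl'.subset hx))).resolve_left
      fun hxL => (hle x hx).not_gt (hL x hxL))
    fun x hx y hy z hz => hfg x y z (hle x hx) (hle y hy) (hle z hz)

theorem capFree_glueCup (hL : ∀ x ∈ SL, x < M) (hR : ∀ x ∈ SR, M ≤ x)
    (hcapL : CapFree SL cupL a) (hcapR : CapFree SR cupR (a + 1)) :
    CapFree (SL ∪ SR) (glueCup M cupL cupR) (a + 1) := by
  intro l hl
  obtain ⟨l₁, l₂, rfl, h₁, h₂⟩ := hl.2.1.pairwise.exists_eq_append_lt_le M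
  have left (hne : l₁ ≠ []) : IsCapIn SL cupL l₁ :=
    IsCupIn.restrict_left hR hl hne (List.prefix_append l₁ l₂).isInfix h₁
      fun x y z _ _ hz => by simp [glueCup, hz]
  have right (hne : l₂ ≠ []) : IsCapIn SR cupR l₂ :=
    IsCupIn.restrict_right hL hl hne (List.suffix_append l₁ l₂).isInfix h₂
      fun x y z hx _ hz => by simp [glueCup, hx, not_lt.mpr hz]
  rcases l₁.eq_nil_or_concat with rfl | ⟨u, x, rfl⟩
  · simpa using hcapR l₂ (right (by simpa using hl.1))
  have hx : x < M := h₁ x (by simp)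
  rcases l₂ with _ | ⟨r, _ | ⟨r', t⟩⟩
  · have := hcapL _ (left (by simp))
    rw [List.append_nil]
    omega
  · have := hcapL _ (left (by simp))
    rw [List.length_append, List.length_singleton]
    omega
  · -- `x r r'` is colored cup: it meets both blocks and its middle point is on the right
    have := triples_iff.mp hl.2.2.2 u x r r' t (by simp)
    simp [glueCup, hx, h₂ r (by simp), not_lt.mpr (h₂ r' (by simp))] at this

theorem cupFree_glueCup (hL : ∀ x ∈ SL, x < M) (hR : ∀ x ∈ SR, M ≤ x)
    (hcupL : CupFree SL cupL (b + 1)) (hcupR : CupFree SR cupR b) :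
    CupFree (SL ∪ SR) (glueCup M cupL cupR) (b + 1) := by
  intro l hl
  obtain ⟨l₁, l₂, rfl, h₁, h₂⟩ := hl.2.1.pairwise.exists_eq_append_lt_le M
  have left (hne : l₁ ≠ []) : IsCupIn SL cupL l₁ :=
    hl.restrict_left hR hne (List.prefix_append l₁ l₂).isInfix h₁
      fun x y z _ _ hz => by simp [glueCup, hz]
  have right (hne : l₂ ≠ []) : IsCupIn SR cupR l₂ :=
    hl.restrict_right hL hne (List.suffix_append l₁ l₂).isInfix h₂
      fun x y z hx _ hz => by simp [glueCup, hx, not_lt.mpr hz]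
  rcases l₂ with _ | ⟨r, t⟩
  · simpa using hcupL l₁ (left (by simpa using hl.1))
  have hr : M ≤ r := h₂ r (by simp)
  by_cases hl₁ : l₁.length ≤ 1
  · have := hcupR _ (right (by simp))
    simp only [List.length_append, List.length_cons] at this ⊢
    omega
  · obtain ⟨u, y, y', rfl⟩ := List.exists_eq_append_pair (not_le.mp hl₁)
    -- `y y' r` is colored cap: it meets both blocks and its middle point is on the left
    have := triples_iff.mp hl.2.2.2 u y y' r t (by simp)
    simp [glueCup, not_lt.mpr hr, not_le.mpr (h₁ y (by simp)), not_le.mpr (h₁ y' (by simp))] at this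

end Construction

theorem exists_capFree_cupFree_Ico :
    ∀ (m n N : ℕ), ∃ cup : ℕ → ℕ → ℕ → Prop,
      CapFree (Finset.Ico N (N + (m + n).choose m)) cup (m + 2) ∧
      CupFree (Finset.Ico N (N + (m + n).choose m)) cup (n + 2)
  | 0, n, N | m + 1, 0, N =>
    ⟨fun _ _ _ => True, cupFree_of_card_lt (by simp), cupFree_of_card_lt (by simp)⟩
  | m + 1, n + 1, N => by
    have hAB : (m + 1 + (n + 1)).choose (m + 1) =
        (m + (n + 1)).choose m + (m + 1 + n).choose (m + 1) := by
      rw [show m + 1 + (n + 1) = m + n + 1 + 1 by omega, Nat.choose_succ_succ',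
        show m + 1 + n = m + n + 1 by omega]
      rfl
    set A := (m + (n + 1)).choose m
    set B := (m + 1 + n).choose (m + 1)
    obtain ⟨cupL, hcapL, hcupL⟩ := exists_capFree_cupFree_Ico m (n + 1) N
    obtain ⟨cupR, hcapR, hcupR⟩ := exists_capFree_cupFree_Ico (m + 1) n (N + A)
    have hIco : Finset.Ico N (N + (m + 1 + (n + 1)).choose (m + 1)) =
        Finset.Ico N (N + A) ∪ Finset.Ico (N + A) (N + A + B) := by
      rw [Finset.Ico_union_Ico_eq_Ico (by omega) (by omega), hAB, add_assoc]
    have hL : ∀ x ∈ Finset.Ico N (N + A), x < N + A := fun x hx => (Finset.mem_Ico.mp hx).2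
    have hR : ∀ x ∈ Finset.Ico (N + A) (N + A + B), N + A ≤ x :=
      fun x hx => (Finset.mem_Ico.mp hx).1
    exact ⟨glueCup (N + A) cupL cupR, hIco ▸ capFree_glueCup hL hR hcapL hcapR,
      hIco ▸ cupFree_glueCup hL hR hcupL hcupR⟩

theorem stmt2 (a b : ℕ) (ha : 2 ≤ a) (hb : 2 ≤ b) :
    (∃ (S : Finset ℕ) (cup : ℕ → ℕ → ℕ → Prop),
      S.card = Nat.choose (a + b - 4) (a - 2) ∧
      (¬ ∃ l : List ℕ, IsCapIn S cup l ∧ l.length = a) ∧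
      (¬ ∃ l : List ℕ, IsCupIn S cup l ∧ l.length = b)) ∧
    (∀ (β : Type) [LinearOrder β], ∀ (S : Finset β) (cup : β → β → β → Prop),
      (¬ ∃ l : List β, IsCapIn S cup l ∧ l.length = a) →
      (¬ ∃ l : List β, IsCupIn S cup l ∧ l.length = b) →
      S.card ≤ Nat.choose (a + b - 4) (a - 2)) := by
  obtain ⟨a, rfl⟩ := Nat.exists_eq_add_of_le' ha
  obtain ⟨b, rfl⟩ := Nat.exists_eq_add_of_le' hb
  rw [show a + 2 + (b + 2) - 4 = a + b by omega, Nat.add_sub_cancel]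
  refine ⟨?_, fun β _ S cup hcap hcup => card_le_choose_of_capFree_of_cupFree
    ((capFree_iff_not_exists (by omega)).mpr hcap) ((cupFree_iff_not_exists (by omega)).mpr hcup)⟩
  obtain ⟨cup, hcap, hcup⟩ := exists_capFree_cupFree_Ico a b 0
  exact ⟨_, cup, by simp, (capFree_iff_not_exists (by omega)).mp hcap,
    (cupFree_iff_not_exists (by omega)).mp hcup⟩
end

section
/- Every a-cap-free configuration S admits a slope labeling: an assignment s of labels in {1,...,a-2} to all edges (pairs x < y) such that for any x < y < z, s(xy) ≤ s(yz) implies xyz is a cup. Specifically, setting s(e) = c(e) - 1, where c(e) is the maximum size of a cap starting with the edge e, gives such a labeling. -/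
variable {α : Type*} [LinearOrder α]

/-!
Write `c(xy) = sSup (capStartLengths S cup x y)`. Extending a longest cap starting with `yz`
by a vertex `x < y` with `xyz` a cap yields a cap starting with `xy` that is one vertex
longer. Hence if `xyz` is a cap then `c(xy) > c(yz)`, which is the contrapositive of the
slope-labeling property. The bounds `2 ≤ c(e) ≤ a - 1` come from the edge itself being a
`2`-cap and from `a`-cap-freeness.
-/

lemma List.eq_cons_cons_of_take_two_eq {β : Type*} {l : List β} {x y : β}
    (h : l.take 2 = [x, y]) : ∃ t, l = x :: y :: t := by
  match l, h with
  | u :: v :: t, h =>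
    simp only [List.take_succ_cons, List.take_zero, List.cons.injEq] at h
    exact ⟨t, by rw [h.1, h.2.1]⟩

section CapStart

variable {S : Finset α} {cup : α → α → α → Prop} {a : ℕ} {x y z : α}

def capStartLengths (S : Finset α) (cup : α → α → α → Prop) (x y : α) : Set ℕ :=
  {k | ∃ l : List α, IsCapIn S cup l ∧ l.length = k ∧ l.take 2 = [x, y]}

lemma isCapIn_pair (hx : x ∈ S) (hy : y ∈ S) (hxy : x < y) : IsCapIn S cup [x, y] := by
  refine ⟨List.cons_ne_nil _ _, List.isChain_pair.2 hxy, ?_, trivial⟩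
  simp only [List.mem_cons, List.not_mem_nil, or_false]
  rintro w (rfl | rfl) <;> assumption

lemma IsCapIn.cons {t : List α} (hl : IsCapIn S cup (y :: z :: t)) (hx : x ∈ S)
    (hxy : x < y) (hcap : ¬ cup x y z) : IsCapIn S cup (x :: y :: z :: t) := by
  obtain ⟨_, hchain, hmem, htriples⟩ := hl
  refine ⟨List.cons_ne_nil _ _, List.isChain_cons_cons.2 ⟨hxy, hchain⟩, ?_, hcap, htriples⟩
  rintro w (_ | ⟨_, hw⟩)
  exacts [hx, hmem w hw]

lemma two_mem_capStartLengths (hx : x ∈ S) (hy : y ∈ S) (hxy : x < y) :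
    2 ∈ capStartLengths S cup x y :=
  ⟨[x, y], isCapIn_pair hx hy hxy, rfl, rfl⟩

lemma CapFree.lt_of_mem_capStartLengths (hfree : CapFree S cup a) {k : ℕ}
    (hk : k ∈ capStartLengths S cup x y) : k < a := by
  obtain ⟨l, hl, rfl, _⟩ := hk
  exact hfree l hl

lemma CapFree.bddAbove_capStartLengths (hfree : CapFree S cup a) :
    BddAbove (capStartLengths S cup x y) :=
  ⟨a, fun _ hk => (hfree.lt_of_mem_capStartLengths hk).le⟩

lemma CapFree.sSup_capStartLengths_mem (hfree : CapFree S cup a) (hx : x ∈ S) (hy : y ∈ S)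
    (hxy : x < y) : sSup (capStartLengths S cup x y) ∈ capStartLengths S cup x y :=
  Nat.sSup_mem ⟨2, two_mem_capStartLengths hx hy hxy⟩ hfree.bddAbove_capStartLengths

lemma CapFree.sSup_capStartLengths_lt (hfree : CapFree S cup a) (hx : x ∈ S) (hy : y ∈ S)
    (hxy : x < y) : sSup (capStartLengths S cup x y) < a :=
  hfree.lt_of_mem_capStartLengths (hfree.sSup_capStartLengths_mem hx hy hxy)

lemma CapFree.two_le_sSup_capStartLengths (hfree : CapFree S cup a) (hx : x ∈ S)
    (hy : y ∈ S) (hxy : x < y) : 2 ≤ sSup (capStartLengths S cup x y) :=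
  le_csSup hfree.bddAbove_capStartLengths (two_mem_capStartLengths hx hy hxy)

lemma CapFree.sSup_capStartLengths_lt_of_not_cup (hfree : CapFree S cup a) (hx : x ∈ S)
    (hy : y ∈ S) (hz : z ∈ S) (hxy : x < y) (hyz : y < z) (hcap : ¬ cup x y z) :
    sSup (capStartLengths S cup y z) < sSup (capStartLengths S cup x y) := by
  obtain ⟨l, hl, hlen, htake⟩ := hfree.sSup_capStartLengths_mem hy hz hyz
  obtain ⟨t, rfl⟩ := List.eq_cons_cons_of_take_two_eq htake
  have hext : (y :: z :: t).length + 1 ∈ capStartLengths S cup x y :=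
    ⟨x :: y :: z :: t, hl.cons hx hxy hcap, rfl, rfl⟩
  rw [← hlen]
  exact Nat.lt_of_succ_le (le_csSup hfree.bddAbove_capStartLengths hext)

theorem CapFree.isSlopeLabeling (hfree : CapFree S cup a) :
    IsSlopeLabeling S cup a (fun x y => sSup (capStartLengths S cup x y) - 1) := by
  refine ⟨fun x hx y hy hxy => ?_, fun x hx y hy z hz hxy hyz hle => ?_⟩
  · have := hfree.two_le_sSup_capStartLengths hx hy hxy
    have := hfree.sSup_capStartLengths_lt hx hy hxy
    dsimp only
    omega
  · by_contra hcap
    have := hfree.sSup_capStartLengths_lt_of_not_cup hx hy hz hxy hyz hcap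
    have := hfree.two_le_sSup_capStartLengths hy hz hyz
    dsimp only at hle
    omega

end CapStart

theorem stmt3_general (a : ℕ) (S : Finset α) (cup : α → α → α → Prop)
    (hfree : CapFree S cup a) :
    IsSlopeLabeling S cup a
      (fun x y =>
        sSup {k | ∃ l : List α, IsCapIn S cup l ∧ l.length = k ∧ l.take 2 = [x, y]} - 1) ∧
    ∃ s : α → α → ℕ, IsSlopeLabeling S cup a s :=
  ⟨hfree.isSlopeLabeling, _, hfree.isSlopeLabeling⟩

theorem stmt3 (a : ℕ) (ha : 2 ≤ a) (S : Finset α) (cup : α → α → α → Prop)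
    (hfree : CapFree S cup a) :
    IsSlopeLabeling S cup a
      (fun x y =>
        sSup {k | ∃ l : List α, IsCapIn S cup l ∧ l.length = k ∧ l.take 2 = [x, y]} - 1) ∧
    ∃ s : α → α → ℕ, IsSlopeLabeling S cup a s :=
  stmt3_general a S cup hfree
end

section
/- Let n ≥ 4 and let S be a 4-cap-free, n-cup-free configuration. Suppose S contains an (n-1)-cup from x to y, an (n-2)-cup ending at x, and an (n-2)-cup starting at y. Then S contains a pair of interweaved laced (n-1)-cups. -/
variable {α : Type*} [LinearOrder α]

/-!
Write `C = x c₂ c₃ …`, let `a` be the vertex before `x` on the `(n-2)`-cup ending at `x` and `b`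
the vertex after `y` on the `(n-2)`-cup starting at `y`. Neither `a x c₂` nor `c₂ y b` can be a
cup, since gluing would produce an `n`-cup, so 4-cap-freeness makes `x c₂ y` and then every
`p c₂ y` with `p < c₂` a cup. If `a c₂ c₃` is a cup, replacing `x` by `a` in `C` gives an
`(n-1)`-cup ending at `y`; otherwise 4-cap-freeness makes the cup ending at `x`, with `x` replaced
by `c₂ y`, an `(n-1)`-cup. Either one starts before `x` and is laced by the `(n-2)`-cup starting
at `y`. The mirror image of the configuration yields a laced `(n-1)`-cup starting at `x` and
ending after `y`, and the two cups interweave.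
-/

section Triples

variable {β γ : Type*} {f : β → β → β → Prop}

theorem triples_iff_getElem :
    ∀ {l : List β}, Triples f l ↔ ∀ i (h : i + 2 < l.length), f l[i] l[i + 1] l[i + 2]
  | [] | [_] | [_, _] => by simp [Triples]
  | x :: y :: z :: l => by
    rw [Triples, triples_iff_getElem]
    constructor
    · rintro ⟨h₀, h⟩ (_ | i) hi
      · exact h₀
      · exact h i (by simp at hi ⊢; omega)
    · intro h
      exact ⟨h 0 (by simp), fun i hi => h (i + 1) (by simp at hi ⊢; omega)⟩

theorem triples_reverse {l : List β} :
    Triples f l.reverse ↔ Triples (fun a b c => f c b a) l := by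
  simp only [triples_iff_getElem, List.getElem_reverse, List.length_reverse]
  constructor <;>
  · intro h i hi
    convert h (l.length - 3 - i) (by omega) using 2 <;> omega

theorem triples_map (g : γ → β) :
    ∀ {l : List γ}, Triples f (l.map g) ↔ Triples (fun a b c => f (g a) (g b) (g c)) l
  | [] | [_] | [_, _] => Iff.rfl
  | _ :: y :: z :: l => and_congr Iff.rfl (triples_map g (l := y :: z :: l))

theorem Triples.tail : ∀ {l : List β}, Triples f l → Triples f l.tail
  | [], _ | [_], _ | [_, _], _ => trivial
  | _ :: _ :: _ :: _, h => h.2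

theorem Triples.dropLast {l : List β} (h : Triples f l) : Triples f l.dropLast := by
  rw [← List.reverse_reverse l, List.dropLast_reverse] at *
  exact triples_reverse.2 (triples_reverse.1 h).tail

theorem Triples.append_cons {a : β} :
    ∀ {l r : List β}, Triples f (l ++ [a]) → Triples f (a :: r) →
      (∀ p ∈ l.getLast?, ∀ w ∈ r.head?, f p a w) → Triples f (l ++ a :: r)
  | [], _, _, h₂, _ => h₂
  | [_], [], _, _, _ => trivial
  | [p], w :: _, _, h₂, hj => ⟨hj p rfl w rfl, h₂⟩
  | [_, _], _, h₁, h₂, hj => ⟨h₁.1, Triples.append_cons (l := [_]) h₁.2 h₂ (by simpa using hj)⟩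
  | _ :: q :: z :: l, _, h₁, h₂, hj =>
    ⟨h₁.1, Triples.append_cons (l := q :: z :: l) h₁.2 h₂ (by simpa using hj)⟩

end Triples

section Cups

variable {S : Finset α} {cup : α → α → α → Prop} {l l₁ l₂ : List α} {p q r : α}

theorem IsCupIn.mem (h : IsCupIn S cup l) (hp : p ∈ l) : p ∈ S := h.2.2.1 p hp

theorem IsCupIn.lt_of_mem_append (h : IsCupIn S cup (l₁ ++ l₂)) (hp : p ∈ l₁) (hq : q ∈ l₂) :
    p < q :=
  (List.pairwise_append.1 (List.isChain_iff_pairwise.1 h.2.1)).2.2 p hp q hq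

theorem IsCupIn.tail (h : IsCupIn S cup l) (hl : l.tail ≠ []) : IsCupIn S cup l.tail :=
  ⟨hl, h.2.1.tail, fun _ hz => h.mem (List.mem_of_mem_tail hz), h.2.2.2.tail⟩

theorem IsCupIn.dropLast (h : IsCupIn S cup l) (hl : l.dropLast ≠ []) :
    IsCupIn S cup l.dropLast :=
  ⟨hl, h.2.1.dropLast, fun _ hz => h.mem (List.mem_of_mem_dropLast hz), h.2.2.2.dropLast⟩

theorem isCupIn_singleton (hp : p ∈ S) : IsCupIn S cup [p] :=
  ⟨List.cons_ne_nil _ _, List.isChain_singleton _, by simpa using hp, trivial⟩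

theorem isCupIn_pair_s11 (hp : p ∈ S) (hq : q ∈ S) (hpq : p < q) : IsCupIn S cup [p, q] :=
  ⟨List.cons_ne_nil _ _, List.isChain_pair.2 hpq, by simp [hp, hq], trivial⟩

theorem isCupIn_triple (hp : p ∈ S) (hq : q ∈ S) (hr : r ∈ S) (hpq : p < q) (hqr : q < r)
    (hpqr : cup p q r) : IsCupIn S cup [p, q, r] :=
  ⟨List.cons_ne_nil _ _, List.isChain_cons_cons.2 ⟨hpq, List.isChain_pair.2 hqr⟩,
    by simp [hp, hq, hr], hpqr, trivial⟩

theorem IsCupIn.append_cons (h₁ : IsCupIn S cup (l₁ ++ [p])) (h₂ : IsCupIn S cup (p :: l₂))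
    (hj : ∀ q ∈ l₁.getLast?, ∀ r ∈ l₂.head?, cup q p r) : IsCupIn S cup (l₁ ++ p :: l₂) := by
  refine ⟨by simp, ?_, fun z hz => ?_, h₁.2.2.2.append_cons h₂.2.2.2 hj⟩
  · have := h₁.2.1.append_overlap (l₂ := [p]) (l₃ := l₂) h₂.2.1 (List.cons_ne_nil _ _)
    rwa [List.append_assoc, List.singleton_append] at this
  · rcases List.mem_append.1 hz with hz | hz
    · exact h₁.mem (List.mem_append_left _ hz)
    · exact h₂.mem hz

theorem CupFree.not_cup {n : ℕ} (hncf : CupFree S cup n)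
    (h₁ : IsCupIn S cup (l₁ ++ [p] ++ [q])) (h₂ : IsCupIn S cup (q :: r :: l₂))
    (hlen : n ≤ l₁.length + l₂.length + 3) : ¬ cup p q r := fun h => by
  have := hncf _ (h₁.append_cons h₂ (by simpa using h))
  simp at this; omega

theorem CapFree.cup_or_cup (h4 : CapFree S cup 4) {s : α} (hp : p ∈ S) (hq : q ∈ S) (hr : r ∈ S)
    (hs : s ∈ S) (hpq : p < q) (hqr : q < r) (hrs : r < s) : cup p q r ∨ cup q r s := by
  by_contra! h
  have := h4 [p, q, r, s] ⟨List.cons_ne_nil _ _,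
    List.isChain_cons_cons.2 ⟨hpq, List.isChain_cons_cons.2 ⟨hqr, List.isChain_pair.2 hrs⟩⟩,
    by simp [hp, hq, hr, hs],
    h.1, h.2, trivial⟩
  simp at this

theorem IsCupIn.isLacedCup_of_endsAt {n : ℕ} {C Cy : List α} (hn : 2 ≤ n) (hC : IsCupIn S cup C)
    (hClen : C.length = n - 1) (hCy : EndsAt C q) (hy : IsCupIn S cup Cy)
    (hylen : Cy.length = n - 2) (hystart : StartsAt Cy q) : IsLacedCup S cup n C := by
  obtain ⟨p, C', rfl⟩ := List.exists_cons_of_ne_nil hC.1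
  exact ⟨hC, hClen, p, q, [p], Cy, rfl, hCy, isCupIn_singleton (hC.mem List.mem_cons_self),
    hy, rfl, hystart, by simp; omega⟩

theorem IsCupIn.le_of_startsAt_of_endsAt (hC : IsCupIn S cup l) (hp : StartsAt l p)
    (hq : EndsAt l q) : p ≤ q := by
  obtain ⟨l', rfl⟩ := List.head?_eq_some_iff.1 hp
  rcases List.mem_cons.1 (List.mem_of_getLast? hq) with rfl | hq
  · exact le_rfl
  · exact (hC.lt_of_mem_append (l₁ := [p]) (by simp) hq).le

end Cups

section Mirror

open OrderDual

section

variable {β : Type*} {l : List β}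

theorem opList_surjective : Function.Surjective (opList : List β → List βᵒᵈ) := fun L =>
  ⟨(L.map ofDual).reverse, by simp [opList, List.map_reverse]⟩

theorem length_opList : (opList l).length = l.length := by simp [opList]

theorem startsAt_opList {p : βᵒᵈ} : StartsAt (opList l) p ↔ EndsAt l (ofDual p) := by
  simp [StartsAt, EndsAt, opList, ← Equiv.eq_symm_apply]

theorem endsAt_opList {p : βᵒᵈ} : EndsAt (opList l) p ↔ StartsAt l (ofDual p) := by
  simp [StartsAt, EndsAt, opList, ← Equiv.eq_symm_apply]

theorem triples_opList {f : βᵒᵈ → βᵒᵈ → βᵒᵈ → Prop} :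
    Triples f (opList l) ↔ Triples (fun a b c => f (toDual c) (toDual b) (toDual a)) l := by
  rw [opList, triples_reverse, triples_map]

end

variable {S : Finset α} {cup : α → α → α → Prop} {l : List α}

theorem isChain_opList : (opList l).IsChain (· < ·) ↔ l.IsChain (· < ·) :=
  List.isChain_reverse.trans (List.isChain_map _)

theorem isCupIn_opList : IsCupIn (opSet S) (opCup cup) (opList l) ↔ IsCupIn S cup l := by
  rw [IsCupIn, IsCupIn, triples_opList]
  exact and_congr (by simp [opList]) (and_congr isChain_opList (and_congr (by simp [opSet, opList])
    Iff.rfl))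

theorem isCapIn_opList : IsCapIn (opSet S) (opCup cup) (opList l) ↔ IsCapIn S cup l := by
  rw [IsCapIn, IsCapIn, triples_opList]
  exact and_congr (by simp [opList]) (and_congr isChain_opList (and_congr (by simp [opSet, opList])
    Iff.rfl))

theorem CapFree.op {k : ℕ} (h : CapFree S cup k) : CapFree (opSet S) (opCup cup) k := by
  intro L hL
  obtain ⟨l, rfl⟩ := opList_surjective L
  simpa [length_opList] using h l (isCapIn_opList.1 hL)

theorem CupFree.op {k : ℕ} (h : CupFree S cup k) : CupFree (opSet S) (opCup cup) k := by
  intro L hL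
  obtain ⟨l, rfl⟩ := opList_surjective L
  simpa [length_opList] using h l (isCupIn_opList.1 hL)

theorem IsLacedCup.of_opList {n : ℕ} (h : IsLacedCup (opSet S) (opCup cup) n (opList l)) :
    IsLacedCup S cup n l := by
  obtain ⟨hl, hlen, p, q, Cp, Cq, hp, hq, hCp, hCq, hCpp, hCqq, hsum⟩ := h
  obtain ⟨Cp, rfl⟩ := opList_surjective Cp
  obtain ⟨Cq, rfl⟩ := opList_surjective Cq
  refine ⟨isCupIn_opList.1 hl, length_opList ▸ hlen, ofDual q, ofDual p, Cq, Cp,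
    endsAt_opList.1 hq, startsAt_opList.1 hp, isCupIn_opList.1 hCq, isCupIn_opList.1 hCp,
    startsAt_opList.1 hCqq, endsAt_opList.1 hCpp, ?_⟩
  rwa [length_opList, length_opList, add_comm] at hsum

end Mirror

section Laced

variable {n : ℕ} {S : Finset α} {cup : α → α → α → Prop}

theorem exists_isLacedCup_endsAt_startsAt_lt' (hn : 4 ≤ n) (h4 : CapFree S cup 4)
    (hncf : CupFree S cup n) {A T U : List α} {a x c₂ c₃ y b : α}
    (hC : IsCupIn S cup (x :: c₂ :: c₃ :: T)) (hClen : T.length + 3 = n - 1)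
    (hCy : EndsAt (c₃ :: T) y) (hx : IsCupIn S cup (A ++ [a] ++ [x]))
    (hxlen : A.length + 2 = n - 2) (hy : IsCupIn S cup (y :: b :: U))
    (hylen : U.length + 2 = n - 2) :
    ∃ C₁ p, IsLacedCup S cup n C₁ ∧ StartsAt C₁ p ∧ EndsAt C₁ y ∧ p < x := by
  have hyT : y ∈ c₃ :: T := List.mem_of_getLast? hCy
  have hxS : x ∈ S := hC.mem (by simp)
  have hc₂S : c₂ ∈ S := hC.mem (by simp)
  have hc₃S : c₃ ∈ S := hC.mem (by simp)
  have hyS : y ∈ S := hC.mem (by simp [hyT])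
  have haS : a ∈ S := hx.mem (by simp)
  have hbS : b ∈ S := hy.mem (by simp)
  have hax : a < x := hx.lt_of_mem_append (by simp) (by simp)
  have hxc₂ : x < c₂ := hC.lt_of_mem_append (l₁ := [x]) (by simp) (by simp)
  have hc₂c₃ : c₂ < c₃ := hC.lt_of_mem_append (l₁ := [x, c₂]) (by simp) (by simp)
  have hc₂y : c₂ < y := hC.lt_of_mem_append (l₁ := [x, c₂]) (by simp) hyT
  have hyb : y < b := hy.lt_of_mem_append (l₁ := [y]) (by simp) (by simp)
  have hac₂ : a < c₂ := hax.trans hxc₂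
  have hA : IsCupIn S cup (A ++ [a]) := by simpa using hx.dropLast (by simp)
  have hxc₂y : cup x c₂ y := (h4.cup_or_cup haS hxS hc₂S hyS hax hxc₂ hc₂y).resolve_left
    (hncf.not_cup hx hC (by simp; omega))
  have hc₂y_of_lt : ∀ p ∈ S, p < c₂ → cup p c₂ y := fun p hp hpc₂ =>
    (h4.cup_or_cup hp hc₂S hyS hbS hpc₂ hc₂y hyb).resolve_right
      (hncf.not_cup (l₁ := [x]) (isCupIn_triple hxS hc₂S hyS hxc₂ hc₂y hxc₂y) hy
        (by simp; omega))
  have hlaced {C₁ : List α} (h : IsCupIn S cup C₁) (hlen : C₁.length = n - 1)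
      (hC₁y : EndsAt C₁ y) : IsLacedCup S cup n C₁ :=
    h.isLacedCup_of_endsAt (by omega) hlen hC₁y hy (by simpa using hylen) rfl
  by_cases hac₂c₃ : cup a c₂ c₃
  · have hC₁ : IsCupIn S cup (a :: c₂ :: c₃ :: T) :=
      (isCupIn_pair_s11 haS hc₂S hac₂).append_cons (l₁ := [a]) (hC.tail (by simp))
        (by simpa using hac₂c₃)
    have hC₁y : EndsAt (a :: c₂ :: c₃ :: T) y := by simpa [EndsAt] using hCy
    exact ⟨_, a, hlaced hC₁ (by simpa using hClen) hC₁y, rfl, hC₁y, hax⟩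
  · have hC₁ : IsCupIn S cup (A ++ [a, c₂, y]) := by
      refine hA.append_cons
        (isCupIn_triple haS hc₂S hyS hac₂ hc₂y (hc₂y_of_lt a haS hac₂))
        fun q hq r hr => ?_
      obtain rfl : r = c₂ := by simpa using hr.symm
      have hqA : q ∈ A := List.mem_of_getLast? hq
      exact (h4.cup_or_cup (hA.mem (by simp [hqA])) haS hc₂S hc₃S
        (hA.lt_of_mem_append hqA (by simp)) hac₂ hc₂c₃).resolve_right hac₂c₃
    obtain ⟨p, A', hpA⟩ := List.exists_cons_of_ne_nil (show A ++ [a] ≠ [] by simp)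
    exact ⟨_, p, hlaced hC₁ (by simp; omega) (by simp [EndsAt]),
      by rw [StartsAt, List.append_cons, hpA]; rfl, by simp [EndsAt],
      hx.lt_of_mem_append (by simp [hpA]) (by simp)⟩

theorem exists_isLacedCup_endsAt_startsAt_lt (hn : 4 ≤ n) (h4 : CapFree S cup 4)
    (hncf : CupFree S cup n) {x y : α} {C Cx Cy : List α}
    (hC : IsCupIn S cup C) (hClen : C.length = n - 1) (hCx : StartsAt C x) (hCy : EndsAt C y)
    (hx : IsCupIn S cup Cx) (hxlen : Cx.length = n - 2) (hxend : EndsAt Cx x)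
    (hy : IsCupIn S cup Cy) (hylen : Cy.length = n - 2) (hystart : StartsAt Cy y) :
    ∃ C₁ p, IsLacedCup S cup n C₁ ∧ StartsAt C₁ p ∧ EndsAt C₁ y ∧ p < x := by
  obtain ⟨C', rfl⟩ := List.head?_eq_some_iff.1 hCx
  obtain ⟨c₂, c₃, T, rfl⟩ : ∃ c₂ c₃ T, C' = c₂ :: c₃ :: T := by
    rcases C' with _ | ⟨c₂, _ | ⟨c₃, T⟩⟩
    · simp at hClen; omega
    · simp at hClen; omega
    · exact ⟨_, _, _, rfl⟩
  obtain ⟨Cx', rfl⟩ := List.getLast?_eq_some_iff.1 hxend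
  obtain ⟨A, a, rfl⟩ : ∃ A a, Cx' = A ++ [a] := by
    rcases List.eq_nil_or_concat Cx' with rfl | ⟨A, a, rfl⟩
    · simp at hxlen; omega
    · exact ⟨A, a, List.concat_eq_append⟩
  obtain ⟨Cy', rfl⟩ := List.head?_eq_some_iff.1 hystart
  obtain ⟨b, U, rfl⟩ : ∃ b U, Cy' = b :: U := List.exists_cons_of_ne_nil (by
    rintro rfl; simp at hylen; omega)
  simp only [List.length_cons, List.length_append] at hClen hxlen hylen
  exact exists_isLacedCup_endsAt_startsAt_lt' hn h4 hncf hC (by omega) (by simpa [EndsAt] using hCy)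
    hx (by omega) hy (by omega)

open OrderDual in
theorem exists_isLacedCup_startsAt_endsAt_gt (hn : 4 ≤ n) (h4 : CapFree S cup 4)
    (hncf : CupFree S cup n) {x y : α} {C Cx Cy : List α}
    (hC : IsCupIn S cup C) (hClen : C.length = n - 1) (hCx : StartsAt C x) (hCy : EndsAt C y)
    (hx : IsCupIn S cup Cx) (hxlen : Cx.length = n - 2) (hxend : EndsAt Cx x)
    (hy : IsCupIn S cup Cy) (hylen : Cy.length = n - 2) (hystart : StartsAt Cy y) :
    ∃ C₂ s, IsLacedCup S cup n C₂ ∧ StartsAt C₂ x ∧ EndsAt C₂ s ∧ y < s := by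
  obtain ⟨L, s, hL, hLs, hLx, hsy⟩ := exists_isLacedCup_endsAt_startsAt_lt (x := toDual y)
    (y := toDual x) hn h4.op hncf.op (isCupIn_opList.2 hC) (length_opList.trans hClen)
    (startsAt_opList.2 hCy) (endsAt_opList.2 hCx) (isCupIn_opList.2 hy)
    (length_opList.trans hylen) (endsAt_opList.2 hystart) (isCupIn_opList.2 hx)
    (length_opList.trans hxlen) (startsAt_opList.2 hxend)
  obtain ⟨C₂, rfl⟩ := opList_surjective L
  exact ⟨C₂, ofDual s, hL.of_opList, endsAt_opList.1 hLx, startsAt_opList.1 hLs, hsy⟩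

end Laced

theorem stmt11 (n : ℕ) (hn : 4 ≤ n) (S : Finset α) (cup : α → α → α → Prop)
    (h4 : CapFree S cup 4) (hncf : CupFree S cup n)
    (x y : α) (C Cx Cy : List α)
    (hC : IsCupIn S cup C) (hClen : C.length = n - 1)
    (hCx : StartsAt C x) (hCy : EndsAt C y)
    (hx : IsCupIn S cup Cx) (hxlen : Cx.length = n - 2) (hxend : EndsAt Cx x)
    (hy : IsCupIn S cup Cy) (hylen : Cy.length = n - 2) (hystart : StartsAt Cy y) :
    ∃ C₁ C₂ : List α, IsLacedCup S cup n C₁ ∧ IsLacedCup S cup n C₂ ∧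
      Interweaved C₁ C₂ := by
  obtain ⟨C₁, p, hC₁, hp, hC₁y, hpx⟩ := exists_isLacedCup_endsAt_startsAt_lt hn h4 hncf
    hC hClen hCx hCy hx hxlen hxend hy hylen hystart
  obtain ⟨C₂, s, hC₂, hC₂x, hs, hys⟩ := exists_isLacedCup_startsAt_endsAt_gt hn h4 hncf
    hC hClen hCx hCy hx hxlen hxend hy hylen hystart
  exact ⟨C₁, C₂, hC₁, hC₂, p, y, x, s, hp, hC₁y, hC₂x, hs, hpx,
    hC.le_of_startsAt_of_endsAt hCx hCy, hys⟩
end
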